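/- Let F be a tract with involution and 𝓒 an F-signature of an orthogonal matroid satisfying 2-term orthogonality (⟨X, Y*⟩ ∈ N_F whenever X, Y ∈ 𝓒 and |supp(X) ∩ supp(Y)*| = 2). If X, X′ ∈ 𝓒 have the same support, then X = αX′ for some α ∈ F^×. -/
import Mathlib


open scoped Classical

/-- The ground set `E = [n] ∪ [n]*`: `(i, true)` encodes `i ∈ [n]` and `(i, false)` encodes
`i* ∈ [n]*`. -/
abbrev OE (n : ℕ) := Fin n × Bool

/-- The involution `* : E → E`. -/
def ostar {n : ℕ} (x : OE n) : OE n := (x.1, !x.2)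

/-- The divergence `{x, x*}`. -/
def pairS {n : ℕ} (x : OE n) : Finset (OE n) := {x, ostar x}

/-- `A` is admissible (a subtransversal): `A ∩ A* = ∅`. -/
def IsAdmissible {n : ℕ} (A : Finset (OE n)) : Prop := ∀ x ∈ A, ostar x ∉ A

/-- A transversal: an admissible set of size `n`. -/
def IsTransversal {n : ℕ} (T : Finset (OE n)) : Prop := T.card = n ∧ IsAdmissible T

/-- `𝓑` is the set of bases of an orthogonal matroid on `E = [n] ∪ [n]*`: a nonempty
collection of transversals satisfying the symmetric exchange axiom. -/
def IsOrthoMatroid {n : ℕ} (𝓑 : Set (Finset (OE n))) : Prop :=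
  𝓑.Nonempty ∧ (∀ B ∈ 𝓑, IsTransversal B) ∧
  ∀ B₁ ∈ 𝓑, ∀ B₂ ∈ 𝓑, ∀ x : OE n,
    x ∈ symmDiff B₁ B₂ → ostar x ∈ symmDiff B₁ B₂ →
    ∃ y : OE n, y ∈ symmDiff B₁ B₂ ∧ ostar y ∈ symmDiff B₁ B₂ ∧
      pairS y ≠ pairS x ∧ symmDiff B₁ (pairS x ∪ pairS y) ∈ 𝓑

/-- An admissible set is independent if it is contained in some basis. -/
def IsIndep {n : ℕ} (𝓑 : Set (Finset (OE n))) (I : Finset (OE n)) : Prop := ∃ B ∈ 𝓑, I ⊆ B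

/-- A circuit: a minimal dependent admissible set. -/
def IsCircuit {n : ℕ} (𝓑 : Set (Finset (OE n))) (C : Finset (OE n)) : Prop :=
  IsAdmissible C ∧ ¬ IsIndep 𝓑 C ∧ ∀ D ⊂ C, IsIndep 𝓑 D

/-- A tract structure on a pointed commutative group `F = F^× ∪ {0}`: the null set `N` is a set
of multisets of nonzero elements of `F` (a multiset encodes a formal `ℕ`-linear combination of
elements of the group `F^×`, i.e. an element of the group semiring `ℕ[F^×]`). -/
structure TractOn (F : Type) [CommGroupWithZero F] where
  /-- The null set `N_F ⊆ ℕ[F^×]`. -/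
  N : Set (Multiset F)
  /-- Members of `N_F` are formal sums of elements of `F^× = F \ {0}`. -/
  not_zero_mem : ∀ S ∈ N, (0 : F) ∉ S
  /-- (T1) `0 ∈ N_F`. -/
  zero_mem : (0 : Multiset F) ∈ N
  /-- (T2) `1 ∉ N_F`. -/
  one_not_mem : ({1} : Multiset F) ∉ N
  /-- (T3) there is a unique `ε ∈ F^×` with `1 + ε ∈ N_F`. -/
  eps_exists : ∃! ε : F, ε ≠ 0 ∧ ({1, ε} : Multiset F) ∈ N
  /-- (T4) `N_F` is closed under multiplication by elements of `F^×`. -/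
  smul_mem : ∀ g : F, g ≠ 0 → ∀ S ∈ N, Multiset.map (fun a => g * a) S ∈ N

/-- The distinguished element `ε` (playing the role of `-1`) of a tract. -/
noncomputable def TractOn.eps {F : Type} [CommGroupWithZero F] (t : TractOn F) : F :=
  t.eps_exists.exists.choose

/-- A formal sum of (possibly zero) elements of `F` "sums to zero" in the tract `t`:
after discarding zero summands it lies in the null set. -/
def TractOn.Null {F : Type} [CommGroupWithZero F] (t : TractOn F) (S : Multiset F) : Prop :=
  Multiset.filter (fun x => x ≠ 0) S ∈ t.N

/-- The support of a vector `X ∈ F^E`. -/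
noncomputable def suppV {n : ℕ} {F : Type} [Zero F] (X : OE n → F) : Finset (OE n) :=
  Finset.univ.filter (fun e => X e ≠ 0)

/-- `X*`, defined by `X*(i) = X(i*)`. -/
def starV {n : ℕ} {F : Type} (X : OE n → F) : OE n → F := fun e => X (ostar e)

/-- `conj(X)`: apply the involution `σ` on the `[n]*`-coordinates only. -/
def conjV {n : ℕ} {F : Type} (σ : F → F) (X : OE n → F) : OE n → F :=
  fun e => if e.2 = true then X e else σ (X e)

/-- The formal sum of the `2n` terms of the inner product
`⟨X, Y⟩ = Σ_{i ∈ [n]} (X(i)·σ(Y(i)) + σ(X(i*))·Y(i*))`. -/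
def innerTerms {n : ℕ} {F : Type} [Mul F] (σ : F → F) (X Y : OE n → F) : Multiset F :=
  (Multiset.map (fun i : Fin n => X (i, true) * σ (Y (i, true))) Finset.univ.val) +
  (Multiset.map (fun i : Fin n => σ (X (i, false)) * Y (i, false)) Finset.univ.val)

/-- `X ⊥ Y` in the tract `t`: the inner product `⟨X, Y⟩` lies in the null set. -/
def OrthPair {n : ℕ} {F : Type} [CommGroupWithZero F] (t : TractOn F) (σ : F → F)
    (X Y : OE n → F) : Prop :=
  t.Null (innerTerms σ X Y)

/-- `σ` is an involution of the tract `t`. -/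
structure IsTractInvol {F : Type} [CommGroupWithZero F] (t : TractOn F) (σ : F → F) :
    Prop where
  invol : ∀ x, σ (σ x) = x
  map_one : σ 1 = 1
  map_mul : ∀ x y, σ (x * y) = σ x * σ y
  map_zero : σ (0 : F) = 0
  map_null : ∀ S ∈ t.N, Multiset.map σ S ∈ t.N

/-- `𝓒 ⊆ F^E` is an `F`-signature of the orthogonal matroid with bases `𝓑`: the supports of
its members are exactly the circuits, and it is closed under scaling by `F^×`. -/
def IsSignature {n : ℕ} {F : Type} [CommGroupWithZero F] (𝓑 : Set (Finset (OE n)))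
    (𝓒 : Set (OE n → F)) : Prop :=
  (∀ X ∈ 𝓒, IsCircuit 𝓑 (suppV X)) ∧
  (∀ C : Finset (OE n), IsCircuit 𝓑 C → ∃ X ∈ 𝓒, suppV X = C) ∧
  (∀ X ∈ 𝓒, ∀ α : F, α ≠ 0 → (fun e => α * X e) ∈ 𝓒)

/-- The 2-term orthogonality (O₂): `⟨X, Y*⟩ ∈ N_F` whenever `|supp X ∩ (supp Y)*| = 2`. -/
def TwoTermOrth {n : ℕ} {F : Type} [CommGroupWithZero F] (t : TractOn F) (σ : F → F)
    (𝓒 : Set (OE n → F)) : Prop :=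
  ∀ X ∈ 𝓒, ∀ Y ∈ 𝓒, (suppV X ∩ (suppV Y).image ostar).card = 2 →
    OrthPair t σ X (starV Y)


section Comb

variable {n : ℕ}

lemma ostar_ostar (x : OE n) : ostar (ostar x) = x := by
  simp [ostar]

lemma mem_pairS {y x : OE n} : y ∈ pairS x ↔ y = x ∨ y = ostar x := by
  simp [pairS]

lemma pairS_ostar (x : OE n) : pairS (ostar x) = pairS x := by
  simp only [pairS, ostar_ostar]
  exact Finset.pair_comm _ _

lemma pairS_eq_of_mem {y x : OE n} (h : y ∈ pairS x) : pairS y = pairS x := by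
  rcases mem_pairS.1 h with h | h
  · rw [h]
  · rw [h, pairS_ostar]

lemma ostar_mem_pairS_iff {y x : OE n} : ostar y ∈ pairS x ↔ y ∈ pairS x := by
  constructor
  · intro h
    rcases mem_pairS.1 h with h | h
    · exact mem_pairS.2 (Or.inr (by rw [← h, ostar_ostar]))
    · exact mem_pairS.2 (Or.inl (by
        have := congrArg ostar h
        rwa [ostar_ostar, ostar_ostar] at this))
  · intro h
    rcases mem_pairS.1 h with h | h
    · exact mem_pairS.2 (Or.inr (by rw [h]))
    · exact mem_pairS.2 (Or.inl (by rw [h, ostar_ostar]))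

lemma isTransversal_iff {T : Finset (OE n)} :
    IsTransversal T ↔ ∀ x : OE n, x ∈ T ↔ ostar x ∉ T := by
  constructor
  · rintro ⟨hcard, hadm⟩ x
    constructor
    · exact fun hx => hadm x hx
    · intro hx
      by_contra hxT
      -- every fiber is hit
      have hinj : Set.InjOn Prod.fst (T : Set (OE n)) := by
        rintro ⟨a, b⟩ ha ⟨a', b'⟩ hb (h : a = a')
        subst h
        by_contra hne
        have hb' : b' = !b := by
          cases b <;> cases b' <;> simp_all
        exact hadm _ ha (by simpa [ostar, hb'] using hb)
      have himg : T.image Prod.fst = Finset.univ := by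
        apply Finset.eq_univ_of_card
        rw [Finset.card_image_of_injOn hinj, hcard]
        simp
      have : x.1 ∈ T.image Prod.fst := by rw [himg]; exact Finset.mem_univ _
      obtain ⟨y, hy, hyx⟩ := Finset.mem_image.1 this
      have : y = x ∨ y = ostar x := by
        obtain ⟨y1, y2⟩ := y
        obtain ⟨x1, x2⟩ := x
        simp only [ostar]
        cases y2 <;> cases x2 <;> simp_all
      rcases this with h | h
      · exact hxT (h ▸ hy)
      · exact hx (h ▸ hy)
  · intro h
    have hadm : IsAdmissible T := fun x hx => (h x).1 hx
    refine ⟨?_, hadm⟩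
    have hinj : Set.InjOn Prod.fst (T : Set (OE n)) := by
      rintro ⟨a, b⟩ ha ⟨a', b'⟩ hb (hh : a = a')
      subst hh
      by_contra hne
      have hb' : b' = !b := by cases b <;> cases b' <;> simp_all
      exact hadm _ ha (by simpa [ostar, hb'] using hb)
    have himg : T.image Prod.fst = Finset.univ := by
      apply Finset.eq_univ_iff_forall.2
      intro i
      rcases Classical.em ((i, true) ∈ T) with hi | hi
      · exact Finset.mem_image.2 ⟨_, hi, rfl⟩
      · have : (i, false) ∈ T := by
          have := (h (i, false)).2
          simp only [ostar] at this
          exact this hi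
        exact Finset.mem_image.2 ⟨_, this, rfl⟩
    have := Finset.card_image_of_injOn hinj
    rw [himg] at this
    simpa using this.symm

lemma transversal_mem_of_notMem {T : Finset (OE n)} (hT : IsTransversal T) {x : OE n}
    (hx : x ∉ T) : ostar x ∈ T := by
  by_contra h
  exact hx ((isTransversal_iff.1 hT x).2 h)

lemma transversal_notMem {T : Finset (OE n)} (hT : IsTransversal T) {x : OE n}
    (hx : x ∈ T) : ostar x ∉ T := (isTransversal_iff.1 hT x).1 hx

/-- Flipping one pair in a transversal yields a transversal. -/
lemma transversal_symmDiff_pairS {T : Finset (OE n)} (hT : IsTransversal T) (x : OE n) :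
    IsTransversal (symmDiff T (pairS x)) := by
  rw [isTransversal_iff] at hT ⊢
  intro z
  have h1 := hT z
  have h2 : z ∈ pairS x ↔ ostar z ∈ pairS x := ostar_mem_pairS_iff.symm
  simp only [Finset.mem_symmDiff]
  tauto

/-- In an orthogonal matroid, flipping a single pair in a basis never gives a basis. -/
lemma flip_not_basis {𝓑 : Set (Finset (OE n))} (h𝓑 : IsOrthoMatroid 𝓑) {B : Finset (OE n)}
    (hB : B ∈ 𝓑) (f : OE n) : symmDiff B (pairS f) ∉ 𝓑 := by
  intro hB'
  have hsd : symmDiff B (symmDiff B (pairS f)) = pairS f :=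
    symmDiff_symmDiff_cancel_left _ _
  obtain ⟨y, hy, _, hyne, _⟩ :=
    h𝓑.2.2 B hB _ hB' f (by rw [hsd]; exact mem_pairS.2 (Or.inl rfl))
      (by rw [hsd]; exact mem_pairS.2 (Or.inr rfl))
  rw [hsd] at hy
  exact hyne (pairS_eq_of_mem hy)

/-- Every dependent admissible set contains a circuit. -/
lemma exists_circuit_subset {𝓑 : Set (Finset (OE n))} :
    ∀ A : Finset (OE n), IsAdmissible A → ¬ IsIndep 𝓑 A → ∃ D ⊆ A, IsCircuit 𝓑 D := by
  intro A
  induction A using Finset.strongInductionOn with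
  | _ A ih =>
    intro hA hdep
    by_cases h : ∀ D ⊂ A, IsIndep 𝓑 D
    · exact ⟨A, subset_rfl, hA, hdep, h⟩
    · push_neg at h
      obtain ⟨D, hDA, hdepD⟩ := h
      have hadmD : IsAdmissible D := fun x hx hx' => hA x (hDA.subset hx) (hDA.subset hx')
      obtain ⟨D', hD'2, hcirc⟩ := ih D hDA hadmD hdepD
      exact ⟨D', hD'2.trans hDA.subset, hcirc⟩

end Comb

section PairLem

variable {n : ℕ}

lemma circuit_nonempty {𝓑 : Set (Finset (OE n))} (h𝓑 : IsOrthoMatroid 𝓑)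
    {C : Finset (OE n)} (hC : IsCircuit 𝓑 C) : C.Nonempty := by
  rw [Finset.nonempty_iff_ne_empty]
  intro h
  obtain ⟨B, hB⟩ := h𝓑.1
  exact hC.2.1 ⟨B, hB, by simp [h]⟩

/-- For a circuit `C` and distinct `e, f ∈ C` there is a circuit `D` with
`C ∩ D* = {e, f}`. -/
lemma circuit_pair_lemma {𝓑 : Set (Finset (OE n))} (h𝓑 : IsOrthoMatroid 𝓑)
    {C : Finset (OE n)} (hC : IsCircuit 𝓑 C) {e f : OE n} (he : e ∈ C) (hf : f ∈ C)
    (hef : e ≠ f) :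
    ∃ D : Finset (OE n), IsCircuit 𝓑 D ∧ C ∩ D.image ostar = {e, f} := by
  obtain ⟨hCadm, hCdep, hCmin⟩ := hC
  -- bases over C \ e and C \ f
  obtain ⟨B₁, hB₁, hCe⟩ := hCmin (C.erase e) (Finset.erase_ssubset he)
  obtain ⟨B₂, hB₂, hCf⟩ := hCmin (C.erase f) (Finset.erase_ssubset hf)
  have hB₁T : IsTransversal B₁ := h𝓑.2.1 B₁ hB₁
  have hB₂T : IsTransversal B₂ := h𝓑.2.1 B₂ hB₂
  have heB₁ : e ∉ B₁ := by
    intro heB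
    refine hCdep ⟨B₁, hB₁, fun g hg => ?_⟩
    rcases Classical.em (g = e) with h | h
    · exact h ▸ heB
    · exact hCe (Finset.mem_erase.2 ⟨h, hg⟩)
  have hfB₂ : f ∉ B₂ := by
    intro hfB
    refine hCdep ⟨B₂, hB₂, fun g hg => ?_⟩
    rcases Classical.em (g = f) with h | h
    · exact h ▸ hfB
    · exact hCf (Finset.mem_erase.2 ⟨h, hg⟩)
  have heB₂ : e ∈ B₂ := hCf (Finset.mem_erase.2 ⟨hef, he⟩)
  have hfB₁ : f ∈ B₁ := hCe (Finset.mem_erase.2 ⟨Ne.symm hef, hf⟩)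
  have hseB₁ : ostar e ∈ B₁ := transversal_mem_of_notMem hB₁T heB₁
  have hseB₂ : ostar e ∉ B₂ := transversal_notMem hB₂T heB₂
  have hsfB₂ : ostar f ∈ B₂ := transversal_mem_of_notMem hB₂T hfB₂
  have hsfB₁ : ostar f ∉ B₁ := transversal_notMem hB₁T hfB₁
  -- the exchange at e
  obtain ⟨y, hy, hys, hyne, hBnew⟩ :=
    h𝓑.2.2 B₁ hB₁ B₂ hB₂ e
      (Finset.mem_symmDiff.2 (Or.inr ⟨heB₂, heB₁⟩))
      (Finset.mem_symmDiff.2 (Or.inl ⟨hseB₁, hseB₂⟩))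
  -- elements of C other than e, f lie in both bases
  have hmemboth : ∀ g ∈ C, g ≠ e → g ≠ f → g ∈ B₁ ∧ g ∈ B₂ := fun g hg hge hgf =>
    ⟨hCe (Finset.mem_erase.2 ⟨hge, hg⟩), hCf (Finset.mem_erase.2 ⟨hgf, hg⟩)⟩
  have hyf : pairS y = pairS f := by
    by_contra hne
    refine hCdep ⟨_, hBnew, fun g hg => ?_⟩
    rw [Finset.mem_symmDiff]
    rcases Classical.em (g = e) with h | h
    · subst h
      exact Or.inr ⟨Finset.mem_union_left _ (mem_pairS.2 (Or.inl rfl)), heB₁⟩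
    · have hgB₁ : g ∈ B₁ := hCe (Finset.mem_erase.2 ⟨h, hg⟩)
      refine Or.inl ⟨hgB₁, fun hgU => ?_⟩
      rcases Finset.mem_union.1 hgU with hgU | hgU
      · rcases mem_pairS.1 hgU with h1 | h1
        · exact h h1
        · have : ostar e ∉ C := hCadm e he
          rw [← h1] at this
          exact this hg
      · rcases mem_pairS.1 hgU with h1 | h1
        · -- g = y
          subst h1
          rcases Classical.em (g = f) with h2 | h2
          · exact hne (by rw [h2])
          · obtain ⟨hg1, hg2⟩ := hmemboth g hg h h2
            rcases Finset.mem_symmDiff.1 hy with ⟨_, hc⟩ | ⟨hc, _⟩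
            · exact hc hg2
            · exact (Finset.mem_symmDiff.1 hy).elim (fun p => p.2 hg2) (fun p => p.2 hg1)
        · -- g = ostar y, i.e. y = ostar g
          have hyg : y = ostar g := by
            have := congrArg ostar h1
            rw [ostar_ostar] at this
            exact this.symm
          rcases Classical.em (g = f) with h2 | h2
          · subst h2
            exact hne (by rw [hyg, pairS_ostar])
          · obtain ⟨hg1, hg2⟩ := hmemboth g hg h h2
            have hn1 : ostar g ∉ B₁ := transversal_notMem hB₁T hg1
            have hn2 : ostar g ∉ B₂ := transversal_notMem hB₂T hg2
            rw [hyg] at hy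
            rcases Finset.mem_symmDiff.1 hy with ⟨hc, _⟩ | ⟨hc, _⟩
            · exact hn1 hc
            · exact hn2 hc
  -- so B'' = B₁ ∆ (pairS e ∪ pairS f) is a basis
  rw [hyf] at hBnew
  set B'' := symmDiff B₁ (pairS e ∪ pairS f) with hB''def
  -- the flipped transversal A = B₁ ∆ pairS f
  set A := symmDiff B₁ (pairS f) with hAdef
  have hAT : IsTransversal A := transversal_symmDiff_pairS hB₁T f
  have hAnB : A ∉ 𝓑 := flip_not_basis h𝓑 hB₁ f
  have hAdep : ¬ IsIndep 𝓑 A := by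
    rintro ⟨B', hB', hsub⟩
    have : A = B' := by
      apply Finset.eq_of_subset_of_card_le hsub
      rw [(h𝓑.2.1 B' hB').1, hAT.1]
    exact hAnB (this ▸ hB')
  obtain ⟨D, hDA, hDcirc⟩ := exists_circuit_subset A hAT.2 hAdep
  -- membership facts in A
  have hfA : f ∉ A := by
    rw [hAdef, Finset.mem_symmDiff]
    rintro (⟨_, h2⟩ | ⟨_, h2⟩)
    · exact h2 (mem_pairS.2 (Or.inl rfl))
    · exact h2 hfB₁
  have hsfA : ostar f ∈ A := by
    rw [hAdef, Finset.mem_symmDiff]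
    exact Or.inr ⟨mem_pairS.2 (Or.inr rfl), hsfB₁⟩
  have hsenotpair : ostar e ∉ pairS f := by
    intro hmem
    rcases mem_pairS.1 hmem with h1 | h1
    · have : ostar e ∉ C := hCadm e he
      rw [h1] at this; exact this hf
    · have := congrArg ostar h1
      rw [ostar_ostar, ostar_ostar] at this
      exact hef this
  have hseA : ostar e ∈ A := by
    rw [hAdef, Finset.mem_symmDiff]
    exact Or.inl ⟨hseB₁, hsenotpair⟩
  have hAmem : ∀ z ∈ A, z ≠ ostar f → z ∈ B₁ := by
    intro z hz hzf
    have hz' := hz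
    rw [hAdef, Finset.mem_symmDiff] at hz'
    rcases hz' with ⟨h1, _⟩ | ⟨h1, h2⟩
    · exact h1
    · rcases mem_pairS.1 h1 with h3 | h3
      · rw [h3] at hz; exact absurd hz hfA
      · exact absurd h3 hzf
  -- ostar f ∈ D
  have hsfD : ostar f ∈ D := by
    by_contra hnot
    refine hDcirc.2.1 ⟨B₁, hB₁, fun z hz => ?_⟩
    exact hAmem z (hDA hz) (fun h => hnot (h ▸ hz))
  -- ostar e ∈ D
  have hseD : ostar e ∈ D := by
    by_contra hnot
    refine hDcirc.2.1 ⟨B'', hBnew, fun z hz => ?_⟩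
    have hzA : z ∈ A := hDA hz
    have hzne : z ≠ ostar e := fun h => hnot (h ▸ hz)
    rw [hB''def, Finset.mem_symmDiff]
    rcases Classical.em (z = ostar f) with h1 | h1
    · refine Or.inr ⟨Finset.mem_union_right _ (mem_pairS.2 (Or.inr h1)), ?_⟩
      rw [h1]; exact hsfB₁
    · have hzB₁ : z ∈ B₁ := hAmem z hzA h1
      refine Or.inl ⟨hzB₁, fun hz2 => ?_⟩
      rcases Finset.mem_union.1 hz2 with h2 | h2
      · rcases mem_pairS.1 h2 with h3 | h3
        · rw [h3] at hzB₁; exact heB₁ hzB₁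
        · exact hzne h3
      · rcases mem_pairS.1 h2 with h3 | h3
        · rw [h3] at hzA; exact absurd hzA hfA
        · exact h1 h3
  -- conclusion
  refine ⟨D, hDcirc, ?_⟩
  ext g
  simp only [Finset.mem_inter, Finset.mem_image, Finset.mem_insert, Finset.mem_singleton]
  constructor
  · rintro ⟨hgC, d, hdD, hdg⟩
    have hdg' : d = ostar g := by
      have := congrArg ostar hdg
      rwa [ostar_ostar] at this
    rw [hdg'] at hdD
    by_contra hcon
    push_neg at hcon
    obtain ⟨hge, hgf⟩ := hcon
    have hgB₁ : g ∈ B₁ := hCe (Finset.mem_erase.2 ⟨hge, hgC⟩)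
    have hsg : ostar g ∈ A := hDA hdD
    have hsgf : ostar g ≠ ostar f := by
      intro h
      have := congrArg ostar h
      rw [ostar_ostar, ostar_ostar] at this
      exact hgf this
    have : ostar g ∈ B₁ := hAmem _ hsg hsgf
    exact (transversal_notMem hB₁T hgB₁) this
  · rintro (rfl | rfl)
    · exact ⟨he, ostar g, hseD, ostar_ostar g⟩
    · exact ⟨hf, ostar g, hsfD, ostar_ostar g⟩

end PairLem

section Alg

variable {F : Type} [CommGroupWithZero F]

lemma sigma_ne_zero_iff {t : TractOn F} {σ : F → F} (hσ : IsTractInvol t σ) (x : F) :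
    σ x ≠ 0 ↔ x ≠ 0 := by
  constructor
  · intro h hx
    rw [hx, hσ.map_zero] at h
    exact h rfl
  · intro hx h
    apply hx
    rw [← hσ.invol x, h, hσ.map_zero]

lemma null_pair_ratio (t : TractOn F) {a b a' b' : F} (ha : a ≠ 0) (hb : b ≠ 0)
    (ha' : a' ≠ 0) (hb' : b' ≠ 0) (h1 : ({a, b} : Multiset F) ∈ t.N)
    (h2 : ({a', b'} : Multiset F) ∈ t.N) : a * b' = a' * b := by
  obtain ⟨ε, ⟨hε0, hεN⟩, huni⟩ := t.eps_exists
  have k : ∀ u v : F, u ≠ 0 → v ≠ 0 → ({u, v} : Multiset F) ∈ t.N → u⁻¹ * v = ε := by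
    intro u v hu hv hN
    refine huni _ ⟨mul_ne_zero (inv_ne_zero hu) hv, ?_⟩
    have := t.smul_mem u⁻¹ (inv_ne_zero hu) _ hN
    simpa [inv_mul_cancel₀ hu] using this
  have k1 := k a b ha hb h1
  have k2 := k a' b' ha' hb' h2
  have hbe : b = a * ε := by rw [← k1, mul_inv_cancel_left₀ ha]
  have hb'e : b' = a' * ε := by rw [← k2, mul_inv_cancel_left₀ ha']
  rw [hbe, hb'e, mul_left_comm]

/-- The term of the inner product at a coordinate. -/
def termAtV {n : ℕ} (σ : F → F) (X W : OE n → F) (x : OE n) : F :=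
  if x.2 then X x * σ (W x) else σ (X x) * W x

lemma innerTerms_eq {n : ℕ} (σ : F → F) (X W : OE n → F) :
    innerTerms σ X W =
      Multiset.map (fun i : Fin n => termAtV σ X W (i, true)) Finset.univ.val +
      Multiset.map (fun i : Fin n => termAtV σ X W (i, false)) Finset.univ.val := by
  simp [innerTerms, termAtV]

lemma termAtV_ne_zero {n : ℕ} {σ : F → F} (hσ0 : ∀ x : F, σ x ≠ 0 ↔ x ≠ 0)
    {X W : OE n → F} {x : OE n} (h1 : X x ≠ 0) (h2 : W x ≠ 0) :
    termAtV σ X W x ≠ 0 := by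
  unfold termAtV
  rcases x with ⟨a, b⟩
  cases b <;> simp_all [mul_ne_zero_iff, hσ0]

lemma filter_map_univ {n : ℕ} (g : Fin n → F) (s : Finset (Fin n))
    (h : ∀ i, g i ≠ 0 ↔ i ∈ s) :
    Multiset.filter (fun x => x ≠ 0) (Multiset.map g Finset.univ.val) =
      Multiset.map g s.val := by
  rw [Multiset.filter_map]
  have h2 : Finset.filter (fun i => (fun x => x ≠ 0) ∘ g <| i) Finset.univ = s := by
    ext i
    simpa using h i
  rw [← Finset.filter_val, h2]

lemma pair_finset_val {α : Type} [DecidableEq α] {a b : α} (h : a ≠ b) :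
    ({a, b} : Finset α).val = (a ::ₘ {b} : Multiset α) := by
  rw [Finset.insert_val, Finset.singleton_val, Multiset.ndinsert_of_notMem (by simp [h])]

lemma null_two_terms {n : ℕ} (t : TractOn F) (σ : F → F)
    (hσ0 : ∀ x : F, σ x ≠ 0 ↔ x ≠ 0)
    (X W : OE n → F) (e f : OE n) (hef : e ≠ f)
    (hsupp : ∀ x : OE n, (X x ≠ 0 ∧ W x ≠ 0) ↔ (x = e ∨ x = f))
    (hnull : t.Null (innerTerms σ X W)) :
    ({termAtV σ X W e, termAtV σ X W f} : Multiset F) ∈ t.N := by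
  have hterm : ∀ x : OE n, termAtV σ X W x ≠ 0 ↔ (x = e ∨ x = f) := by
    intro x
    rw [← hsupp x]
    unfold termAtV
    rcases x with ⟨a, b⟩
    cases b <;> simp [mul_ne_zero_iff, hσ0]
  unfold TractOn.Null at hnull
  rw [innerTerms_eq, Multiset.filter_add] at hnull
  obtain ⟨ea, eb⟩ := e
  obtain ⟨fa, fb⟩ := f
  cases eb <;> cases fb
  · -- both false
    have hne : ea ≠ fa := fun h => hef (by rw [h])
    rw [filter_map_univ _ (∅ : Finset (Fin n))
        (fun i => by simpa [Prod.ext_iff] using hterm (i, true)),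
      filter_map_univ _ ({ea, fa} : Finset (Fin n))
        (fun i => by simpa [Prod.ext_iff] using hterm (i, false))] at hnull
    rw [pair_finset_val hne] at hnull
    simpa using hnull
  · -- e false, f true
    rw [filter_map_univ _ ({fa} : Finset (Fin n))
        (fun i => by simpa [Prod.ext_iff] using hterm (i, true)),
      filter_map_univ _ ({ea} : Finset (Fin n))
        (fun i => by simpa [Prod.ext_iff] using hterm (i, false))] at hnull
    simp only [Finset.singleton_val, Multiset.map_singleton, Multiset.singleton_add] at hnull
    rw [show ({termAtV σ X W (ea, false), termAtV σ X W (fa, true)} : Multiset F)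
        = termAtV σ X W (fa, true) ::ₘ {termAtV σ X W (ea, false)} from Multiset.cons_swap _ _ _]
    exact hnull
  · -- e true, f false
    rw [filter_map_univ _ ({ea} : Finset (Fin n))
        (fun i => by simpa [Prod.ext_iff] using hterm (i, true)),
      filter_map_univ _ ({fa} : Finset (Fin n))
        (fun i => by simpa [Prod.ext_iff] using hterm (i, false))] at hnull
    simpa using hnull
  · -- both true
    have hne : ea ≠ fa := fun h => hef (by rw [h])
    rw [filter_map_univ _ ({ea, fa} : Finset (Fin n))
        (fun i => by simpa [Prod.ext_iff] using hterm (i, true)),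
      filter_map_univ _ (∅ : Finset (Fin n))
        (fun i => by simpa [Prod.ext_iff] using hterm (i, false))] at hnull
    rw [pair_finset_val hne] at hnull
    simpa using hnull

lemma termAtV_true {n : ℕ} (σ : F → F) (X W : OE n → F) (a : Fin n) :
    termAtV σ X W (a, true) = X (a, true) * σ (W (a, true)) := by
  simp [termAtV]

lemma termAtV_false {n : ℕ} (σ : F → F) (X W : OE n → F) (a : Fin n) :
    termAtV σ X W (a, false) = σ (X (a, false)) * W (a, false) := by
  simp [termAtV]

lemma cancel4 {a b a' b' c d : F} (hc : c ≠ 0) (hd : d ≠ 0)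
    (h : (a * c) * (b * d) = (a' * c) * (b' * d)) : a * b = a' * b' := by
  have h2 : (a * b) * (c * d) = (a' * b') * (c * d) := by
    rw [← mul_mul_mul_comm a c b d, ← mul_mul_mul_comm a' c b' d]
    exact h
  exact mul_right_cancel₀ (mul_ne_zero hc hd) h2

lemma scal_eq {te tf c c' : F} (hte : te ≠ 0) (htf : tf ≠ 0)
    (h : te * (c * tf) = (c' * te) * tf) : c = c' := by
  have h1 : c * (te * tf) = c' * (te * tf) := by
    rw [← mul_left_comm te c tf, ← mul_assoc c' te tf]
    exact h
  exact mul_right_cancel₀ (mul_ne_zero hte htf) h1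

end Alg

section Key

variable {F : Type} [CommGroupWithZero F]

lemma key_ratio {n : ℕ} (t : TractOn F) (σ : F → F) (hσ : IsTractInvol t σ)
    (𝓒 : Set (OE n → F)) (hscale : ∀ X ∈ 𝓒, ∀ α : F, α ≠ 0 → (fun e => α * X e) ∈ 𝓒)
    (h2 : TwoTermOrth t σ 𝓒)
    (X X' Y : OE n → F) (hX : X ∈ 𝓒) (hX' : X' ∈ 𝓒) (hY : Y ∈ 𝓒)
    (e f : OE n) (hef : e ≠ f)
    (hsupp' : suppV X = suppV X')
    (hint : suppV X ∩ (suppV Y).image ostar = {e, f}) :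
    X e * X' f = X' e * X f := by
  have hσ0 : ∀ x : F, σ x ≠ 0 ↔ x ≠ 0 := fun x => sigma_ne_zero_iff hσ x
  set Z := starV Y with hZdef
  have hZiff : ∀ x : OE n, Z x ≠ 0 ↔ x ∈ (suppV Y).image ostar := by
    intro x
    constructor
    · intro h
      refine Finset.mem_image.2 ⟨ostar x, ?_, ostar_ostar x⟩
      simpa [suppV, hZdef, starV] using h
    · intro h
      obtain ⟨d, hd, hdx⟩ := Finset.mem_image.1 h
      have hd' : d = ostar x := by
        have := congrArg ostar hdx
        rw [ostar_ostar] at this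
        exact this
      rw [hd'] at hd
      simpa [suppV, hZdef, starV] using hd
  have hiff : ∀ x : OE n, (X x ≠ 0 ∧ Z x ≠ 0) ↔ (x = e ∨ x = f) := by
    intro x
    have h1 : (x ∈ suppV X ∩ (suppV Y).image ostar) ↔ (x ∈ ({e, f} : Finset (OE n))) := by
      rw [hint]
    simp only [Finset.mem_inter, Finset.mem_insert, Finset.mem_singleton] at h1
    rw [← h1]
    exact and_congr (by simp [suppV]) (hZiff x).symm.symm
  have hXX' : ∀ x, X x ≠ 0 ↔ X' x ≠ 0 := by
    intro x
    have := Finset.ext_iff.1 hsupp' x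
    simpa [suppV] using this
  have hiff' : ∀ x : OE n, (X' x ≠ 0 ∧ Z x ≠ 0) ↔ (x = e ∨ x = f) := by
    intro x
    rw [← hXX' x]
    exact hiff x
  have hXe : X e ≠ 0 := ((hiff e).2 (Or.inl rfl)).1
  have hZe : Z e ≠ 0 := ((hiff e).2 (Or.inl rfl)).2
  have hXf : X f ≠ 0 := ((hiff f).2 (Or.inr rfl)).1
  have hZf : Z f ≠ 0 := ((hiff f).2 (Or.inr rfl)).2
  have hX'e : X' e ≠ 0 := (hXX' e).1 hXe
  have hX'f : X' f ≠ 0 := (hXX' f).1 hXf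
  have hcard : (suppV X ∩ (suppV Y).image ostar).card = 2 := by
    rw [hint]; exact Finset.card_pair hef
  have horth1 : t.Null (innerTerms σ X Z) := h2 X hX Y hY hcard
  have horth2 : t.Null (innerTerms σ X' Z) := by
    have : (suppV X' ∩ (suppV Y).image ostar).card = 2 := by rw [← hsupp']; exact hcard
    exact h2 X' hX' Y hY this
  have M1 := null_two_terms t σ hσ0 X Z e f hef hiff horth1
  have M2 := null_two_terms t σ hσ0 X' Z e f hef hiff' horth2
  have hte : termAtV σ X Z e ≠ 0 := termAtV_ne_zero hσ0 hXe hZe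
  have htf : termAtV σ X Z f ≠ 0 := termAtV_ne_zero hσ0 hXf hZf
  have hte' : termAtV σ X' Z e ≠ 0 := termAtV_ne_zero hσ0 hX'e hZe
  have htf' : termAtV σ X' Z f ≠ 0 := termAtV_ne_zero hσ0 hX'f hZf
  -- scaled versions
  have hscaled : ∀ β : F, β ≠ 0 →
      ({termAtV σ X (fun x => β * Z x) e, termAtV σ X (fun x => β * Z x) f} :
        Multiset F) ∈ t.N := by
    intro β hβ
    have hYβ : (fun x => β * Y x) ∈ 𝓒 := hscale Y hY β hβ
    have hsuppYβ : suppV (fun x => β * Y x) = suppV Y := by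
      ext x; simp [suppV, hβ]
    have hcardβ : (suppV X ∩ (suppV (fun x => β * Y x)).image ostar).card = 2 := by
      rw [hsuppYβ]; exact hcard
    have horth3 : t.Null (innerTerms σ X (starV (fun x => β * Y x))) :=
      h2 X hX _ hYβ hcardβ
    have hWeq : starV (fun x => β * Y x) = fun x => β * Z x := rfl
    rw [hWeq] at horth3
    have hiffβ : ∀ x, (X x ≠ 0 ∧ β * Z x ≠ 0) ↔ (x = e ∨ x = f) := by
      intro x
      rw [← hiff x]
      simp [hβ]
    exact null_two_terms t σ hσ0 X _ e f hef hiffβ horth3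
  have E1 : termAtV σ X Z e * termAtV σ X' Z f = termAtV σ X' Z e * termAtV σ X Z f :=
    null_pair_ratio t hte htf hte' htf' M1 M2
  have hσZe : σ (Z e) ≠ 0 := (hσ0 _).2 hZe
  have hσZf : σ (Z f) ≠ 0 := (hσ0 _).2 hZf
  -- case analysis on the types of e and f
  obtain ⟨ea, eb⟩ := e
  obtain ⟨fa, fb⟩ := f
  cases eb <;> cases fb
  · -- both false
    rw [termAtV_false, termAtV_false, termAtV_false, termAtV_false] at E1
    have E2 := cancel4 hZe hZf E1
    rw [← hσ.map_mul, ← hσ.map_mul] at E2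
    have := congrArg σ E2
    rwa [hσ.invol, hσ.invol] at this
  · -- e false, f true : mixed
    have hid : ∀ β : F, β ≠ 0 → σ β = β := by
      intro β hβ
      have M3 := hscaled β hβ
      have hA : termAtV σ X (fun x => β * Z x) (ea, false) =
          β * termAtV σ X Z (ea, false) := by
        rw [termAtV_false, termAtV_false]
        simp [mul_comm, mul_left_comm, mul_assoc]
      have hB : termAtV σ X (fun x => β * Z x) (fa, true) =
          σ β * termAtV σ X Z (fa, true) := by
        rw [termAtV_true, termAtV_true, hσ.map_mul]
        simp [mul_comm, mul_left_comm, mul_assoc]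
      rw [hA, hB] at M3
      have E3 : termAtV σ X Z (ea, false) * (σ β * termAtV σ X Z (fa, true)) =
          (β * termAtV σ X Z (ea, false)) * termAtV σ X Z (fa, true) :=
        null_pair_ratio t hte htf (mul_ne_zero hβ hte) (mul_ne_zero ((hσ0 _).2 hβ) htf)
          M1 M3
      exact scal_eq hte htf E3
    rw [termAtV_false, termAtV_false, termAtV_true, termAtV_true] at E1
    have E2 := cancel4 hZe hσZf E1
    -- E2 : σ Xe * X'f = σ X'e * Xf
    rw [hid _ hXe, hid _ hX'e] at E2
    exact E2
  · -- e true, f false : mixed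
    have hid : ∀ β : F, β ≠ 0 → σ β = β := by
      intro β hβ
      have M3 := hscaled β hβ
      have hA : termAtV σ X (fun x => β * Z x) (ea, true) =
          σ β * termAtV σ X Z (ea, true) := by
        rw [termAtV_true, termAtV_true, hσ.map_mul]
        simp [mul_comm, mul_left_comm, mul_assoc]
      have hB : termAtV σ X (fun x => β * Z x) (fa, false) =
          β * termAtV σ X Z (fa, false) := by
        rw [termAtV_false, termAtV_false]
        simp [mul_comm, mul_left_comm, mul_assoc]
      rw [hA, hB] at M3
      have E3 : termAtV σ X Z (ea, true) * (β * termAtV σ X Z (fa, false)) =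
          (σ β * termAtV σ X Z (ea, true)) * termAtV σ X Z (fa, false) :=
        null_pair_ratio t hte htf (mul_ne_zero ((hσ0 _).2 hβ) hte) (mul_ne_zero hβ htf)
          M1 M3
      exact (scal_eq hte htf E3).symm
    rw [termAtV_true, termAtV_true, termAtV_false, termAtV_false] at E1
    have E2 := cancel4 hσZe hZf E1
    -- E2 : Xe * σ X'f = X'e * σ Xf
    rw [hid _ hX'f, hid _ hXf] at E2
    exact E2
  · -- both true
    rw [termAtV_true, termAtV_true, termAtV_true, termAtV_true] at E1
    exact cancel4 hσZe hσZf E1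

end Key
/-- In an `F`-signature satisfying 2-term orthogonality, an `F`-circuit is determined by its
support up to scaling by `F^×`. -/
theorem signature_unique_up_to_scaling {n : ℕ} {F : Type} [CommGroupWithZero F]
    (t : TractOn F) (σ : F → F) (hσ : IsTractInvol t σ)
    (𝓑 : Set (Finset (OE n))) (h𝓑 : IsOrthoMatroid 𝓑)
    (𝓒 : Set (OE n → F)) (hsig : IsSignature 𝓑 𝓒) (h2 : TwoTermOrth t σ 𝓒)
    (X X' : OE n → F) (hX : X ∈ 𝓒) (hX' : X' ∈ 𝓒) (hsupp : suppV X = suppV X') :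
    ∃ α : F, α ≠ 0 ∧ X = fun e => α * X' e := by
  obtain ⟨hsuppC, hexists, hscale⟩ := hsig
  have hC : IsCircuit 𝓑 (suppV X) := hsuppC X hX
  obtain ⟨e, he⟩ := circuit_nonempty h𝓑 hC
  have hXe : X e ≠ 0 := by simpa [suppV] using he
  have hX'e : X' e ≠ 0 := by
    have : e ∈ suppV X' := hsupp ▸ he
    simpa [suppV] using this
  refine ⟨X e * (X' e)⁻¹, mul_ne_zero hXe (inv_ne_zero hX'e), ?_⟩
  funext x
  rcases Classical.em (x ∈ suppV X) with hx | hx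
  · rcases Classical.em (x = e) with rfl | hne
    · rw [mul_assoc, inv_mul_cancel₀ hX'e, mul_one]
    · obtain ⟨D, hD, hint⟩ := circuit_pair_lemma h𝓑 hC he hx (fun h => hne h.symm)
      obtain ⟨Y, hY, hsuppY⟩ := hexists D hD
      have hratio : X e * X' x = X' e * X x :=
        key_ratio t σ hσ 𝓒 hscale h2 X X' Y hX hX' hY e x (fun h => hne h.symm) hsupp
          (by rw [hsuppY]; exact hint)
      have h1 : X e * (X' e)⁻¹ * X' x = (X' e)⁻¹ * (X e * X' x) := by
        rw [mul_comm (X e) (X' e)⁻¹, mul_assoc]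
      rw [h1, hratio, inv_mul_cancel_left₀ hX'e]
  · have h1 : X x = 0 := by simpa [suppV] using hx
    have h2' : X' x = 0 := by
      have : x ∉ suppV X' := hsupp ▸ hx
      simpa [suppV] using this
    rw [h1, h2', mul_zero]
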